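/- arXiv:2302.09374 — 2 statements merged into one kernel-verified Lean document; each statement's English description precedes it below -/
import Mathlib

section
/- Formal first-order Chapman–Enskog expansion: if p = F(A) + τ_r·p₁ + O(τ_r²) is substituted into ∂_t p + E_0 G(A) ∂_x(Au) = −(1/τ_r)(p − F(A)), and the leading-order relation ∂_t F(A) = −E_∞ G(A) ∂_x(Au) holds (from the continuity equation and F(A) = p_0 + (E_∞/W)(α^m − α^n)), then p₁ = (E_∞ − E_0)·G(A)·∂_x(Au), yielding the second-order accurate constitutive law p = F(A) − τ_r(E_0 − E_∞)·G(A)·∂_x(Au) + O(τ_r²). -/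
lemma neg_one_div_mul_add_mul_sub_self {K : Type*} [Field K] {τ F p₁ : K} (hτ : τ ≠ 0) :
    -(1 / τ) * (F + τ * p₁ - F) = -p₁ := by
  field_simp
  ring

/-- `pt` stands for ∂_t p, `dAu` for ∂_x(Au), `G` for G(A) and `F` for F(A). -/
theorem chapman_enskog_first_order_general (E0 Einf τr G F p pt dAu p1 : ℝ)
    (hτ : 0 < τr)
    (hexp : p = F + τr * p1)
    (hpde : pt + E0 * G * dAu = -(1 / τr) * (p - F))
    (hlead : pt = -(Einf * G * dAu)) :
    p1 = (Einf - E0) * G * dAu ∧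
    p = F - τr * (E0 - Einf) * G * dAu := by
  have hp1 : p1 = (Einf - E0) * G * dAu := by
    rw [hexp, hlead, neg_one_div_mul_add_mul_sub_self hτ.ne'] at hpde
    linarith
  exact ⟨hp1, by rw [hexp, hp1]; ring⟩

/-- Algebraic core of the first-order Chapman–Enskog expansion of the SLS
constitutive law: the first-order correction is
p₁ = (E_∞ − E_0) G(A) ∂_x(Au). Here `pt` denotes ∂_t p, `dAu` denotes
∂_x(Au), `G` denotes G(A) and `F` denotes F(A). -/
theorem chapman_enskog_first_order (E0 Einf τr G F p pt dAu p1 : ℝ)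
    (hE : Einf < E0) (hEinf : 0 < Einf) (hτ : 0 < τr)
    (hexp : p = F + τr * p1)
    (hpde : pt + E0 * G * dAu = -(1 / τr) * (p - F))
    (hlead : pt = -(Einf * G * dAu)) :
    p1 = (Einf - E0) * G * dAu ∧
    p = F - τr * (E0 - Einf) * G * dAu :=
  chapman_enskog_first_order_general E0 Einf τr G F p pt dAu p1 hτ hexp hpde hlead
end

section
/- Well-balanced property (algebraic core): for the IMEX stage equations with internal stages A⁽ᵏ⁾, (Au)⁽ᵏ⁾, p⁽ᵏ⁾, if the initial data satisfy ∂_x(Au)ⁿ = 0, ρ∂_x(Au²)ⁿ + Aⁿ∂_x pⁿ = 0, and pⁿ − F(Aⁿ) + τ_r E_0 G(Aⁿ)∂_x(Au)ⁿ = 0, then A⁽ᵏ⁾ = Aⁿ, (Au)⁽ᵏ⁾ = (Au)ⁿ, p⁽ᵏ⁾ = pⁿ for all stages k, and hence Aⁿ⁺¹ = Aⁿ, (Au)ⁿ⁺¹ = (Au)ⁿ, pⁿ⁺¹ = pⁿ. -/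
/-!
At stationary data the explicit fluxes of `A` and `Au` vanish, and since `∂ₓ(Au)ⁿ = 0` and
`pⁿ = F(Aⁿ)` the implicit pressure flux reduces to the linear relaxation `τ_r⁻¹ (p - pⁿ)`.
By strong induction on the stage index, all earlier stages are stationary, so the explicit stages
reproduce the data, and the implicit stage becomes `(1 + Δt a_kk / τ_r)(p⁽ᵏ⁾ - pⁿ) = 0`, whose
coefficient is positive. The final update then sums vanishing fluxes.
-/

open Finset

theorem sub_smul_sum_eq_self {ι R M : Type*} [Fintype ι] [Semiring R] [AddCommGroup M]
    [Module R M] (x : M) (c : R) {f : ι → M} (hf : ∀ i, f i = 0) :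
    x - c • ∑ i, f i = x := by
  simp [hf]

theorem sum_ite_le_eq_of_forall_lt_eq_zero {ι M : Type*} [Fintype ι] [LinearOrder ι]
    [AddCommMonoid M] {g : ι → M} {k : ι} (hg : ∀ j < k, g j = 0) :
    ∑ j, (if j ≤ k then g j else 0) = g k := by
  rw [sum_eq_single k (fun j _ hjk => ?_) (fun hk => absurd (mem_univ k) hk), if_pos le_rfl]
  split_ifs with hj
  exacts [hg j (lt_of_le_of_ne hj hjk), rfl]

theorem eq_of_eq_sub_smul_sub {K M : Type*} [Field K] [AddCommGroup M] [Module K M]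
    {x y : M} {t : K} (ht : 1 + t ≠ 0) (h : y = x - t • (y - x)) : y = x := by
  have hzero : (1 + t) • (y - x) = 0 :=
    calc (1 + t) • (y - x) = y - (x - t • (y - x)) := by module
      _ = 0 := sub_eq_zero.mpr h
  exact sub_eq_zero.mp ((smul_eq_zero.mp hzero).resolve_left ht)

theorem imex_stages_eq_of_stationary {K M N : Type*} [Field K] [AddCommGroup M] [Module K M]
    [AddCommGroup N] [Module K N] {s : ℕ} (ã a : Fin s → Fin s → K) (Δt r : K)
    (fE : M → N → M) (fI : M → N → N) (u₀ : M) (v₀ : N) (u : Fin s → M) (v : Fin s → N)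
    (hu : ∀ k, u k = u₀ - Δt • ∑ j, if j < k then ã k j • fE (u j) (v j) else 0)
    (hv : ∀ k, v k = v₀ - Δt • ∑ j, if j ≤ k then a k j • fI (u j) (v j) else 0)
    (hE : fE u₀ v₀ = 0) (hI : ∀ w, fI u₀ w = r • (w - v₀))
    (hsolv : ∀ k, 1 + Δt * (a k k * r) ≠ 0) (k : Fin s) : u k = u₀ ∧ v k = v₀ := by
  induction k using WellFoundedLT.induction with
  | _ k ih =>
    have huk : u k = u₀ := by
      rw [hu k]
      refine sub_smul_sum_eq_self _ _ fun j => ?_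
      split_ifs with hj
      exacts [by rw [(ih j hj).1, (ih j hj).2, hE, smul_zero], rfl]
    have hsum : ∑ j, (if j ≤ k then a k j • fI (u j) (v j) else 0) =
        (a k k * r) • (v k - v₀) := by
      rw [sum_ite_le_eq_of_forall_lt_eq_zero fun j hj => ?_, huk, hI, smul_smul]
      rw [(ih j hj).1, (ih j hj).2, hI, sub_self, smul_zero, smul_zero]
    have hvk := hv k
    rw [hsum, smul_smul] at hvk
    exact ⟨huk, eq_of_eq_sub_smul_sub (hsolv k) hvk⟩

theorem imex_well_balanced_general (s : ℕ)
    (at_ : Fin s → Fin s → ℝ) (a : Fin s → Fin s → ℝ)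
    (bt : Fin s → ℝ) (b : Fin s → ℝ)
    (Δt τr ρ E0 : ℝ)
    (hΔt : 0 < Δt) (hτr : 0 < τr) (hρ : 0 < ρ)
    (hdiag : ∀ k, 0 ≤ a k k)
    (Dx : (ℝ → ℝ) →ₗ[ℝ] (ℝ → ℝ))
    (G F : ℝ → ℝ)
    (An Qn Pn : ℝ → ℝ)
    (A Q P : Fin s → ℝ → ℝ)
    (hA : ∀ k, A k = An - Δt • ∑ j, if j < k then at_ k j • Dx (Q j) else 0)
    (hQ : ∀ k, Q k = Qn - Δt • ∑ j, if j < k then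
        at_ k j • (Dx (Q j * Q j / A j) + ρ⁻¹ • (A j * Dx (P j))) else 0)
    (hP : ∀ k, P k = Pn - Δt • ∑ j, if j ≤ k then
        a k j • (E0 • ((G ∘ A j) * Dx (Q j)) + τr⁻¹ • (P j - F ∘ A j)) else 0)
    (stat1 : Dx Qn = 0)
    (stat2 : ρ • Dx (Qn * Qn / An) + An * Dx Pn = 0)
    (stat3 : Pn - F ∘ An + (τr * E0) • ((G ∘ An) * Dx Qn) = 0)
    (An1 Qn1 Pn1 : ℝ → ℝ)
    (hAn1 : An1 = An - Δt • ∑ k, bt k • Dx (Q k))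
    (hQn1 : Qn1 = Qn - Δt • ∑ k,
        bt k • (Dx (Q k * Q k / A k) + ρ⁻¹ • (A k * Dx (P k))))
    (hPn1 : Pn1 = Pn - Δt • ∑ k,
        b k • (E0 • ((G ∘ A k) * Dx (Q k)) + τr⁻¹ • (P k - F ∘ A k))) :
    (∀ k, A k = An ∧ Q k = Qn ∧ P k = Pn) ∧
      An1 = An ∧ Qn1 = Qn ∧ Pn1 = Pn := by
  have hPF : Pn = F ∘ An := by
    rwa [stat1, mul_zero, smul_zero, add_zero, sub_eq_zero] at stat3
  have hmom : Dx (Qn * Qn / An) + ρ⁻¹ • (An * Dx Pn) = 0 := by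
    rw [← inv_smul_smul₀ hρ.ne' (Dx (Qn * Qn / An)), ← smul_add, stat2, smul_zero]
  have hrelax : ∀ w, E0 • ((G ∘ An) * Dx Qn) + τr⁻¹ • (w - F ∘ An) = τr⁻¹ • (w - Pn) := by
    intro w
    rw [stat1, mul_zero, smul_zero, zero_add, hPF]
  have hstages : ∀ k, A k = An ∧ Q k = Qn ∧ P k = Pn := by
    intro k
    have h := imex_stages_eq_of_stationary at_ a Δt τr⁻¹
      (fun u p => (Dx u.2, Dx (u.2 * u.2 / u.1) + ρ⁻¹ • (u.1 * Dx p)))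
      (fun u p => E0 • ((G ∘ u.1) * Dx u.2) + τr⁻¹ • (p - F ∘ u.1)) (An, Qn) Pn
      (fun k => (A k, Q k)) P
      (fun k => Prod.ext (by simpa [Prod.fst_sum, apply_ite Prod.fst] using hA k)
        (by simpa [Prod.snd_sum, apply_ite Prod.snd] using hQ k))
      hP (Prod.ext stat1 hmom) hrelax (fun k => by have := hdiag k; positivity) k
    exact ⟨congrArg Prod.fst h.1, congrArg Prod.snd h.1, h.2⟩
  refine ⟨hstages, ?_, ?_, ?_⟩
  · rw [hAn1]
    exact sub_smul_sum_eq_self _ _ fun k => by rw [(hstages k).2.1, stat1, smul_zero]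
  · rw [hQn1]
    refine sub_smul_sum_eq_self _ _ fun k => ?_
    rw [(hstages k).1, (hstages k).2.1, (hstages k).2.2, hmom, smul_zero]
  · rw [hPn1]
    refine sub_smul_sum_eq_self _ _ fun k => ?_
    rw [(hstages k).1, (hstages k).2.1, (hstages k).2.2, hrelax, sub_self, smul_zero, smul_zero]

/-- Well-balanced property of the partitioned IMEX Runge–Kutta scheme
(algebraic core): stationary initial data are preserved by all the internal
stages and by the final update. The spatial derivative is an abstract linear
operator `Dx` on the space of fields `ℝ → ℝ`. -/
theorem imex_well_balanced (s : ℕ)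
    (at_ : Fin s → Fin s → ℝ) (a : Fin s → Fin s → ℝ)
    (bt : Fin s → ℝ) (b : Fin s → ℝ)
    (Δt τr ρ E0 : ℝ)
    (hΔt : 0 < Δt) (hτr : 0 < τr) (hρ : 0 < ρ) (hE0 : 0 < E0)
    (hdiag : ∀ k, 0 ≤ a k k)
    (Dx : (ℝ → ℝ) →ₗ[ℝ] (ℝ → ℝ))
    (G F : ℝ → ℝ)
    (An Qn Pn : ℝ → ℝ)
    (A Q P : Fin s → ℝ → ℝ)
    (hA : ∀ k, A k = An - Δt • ∑ j, if j < k then at_ k j • Dx (Q j) else 0)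
    (hQ : ∀ k, Q k = Qn - Δt • ∑ j, if j < k then
        at_ k j • (Dx (Q j * Q j / A j) + ρ⁻¹ • (A j * Dx (P j))) else 0)
    (hP : ∀ k, P k = Pn - Δt • ∑ j, if j ≤ k then
        a k j • (E0 • ((G ∘ A j) * Dx (Q j)) + τr⁻¹ • (P j - F ∘ A j)) else 0)
    (stat1 : Dx Qn = 0)
    (stat2 : ρ • Dx (Qn * Qn / An) + An * Dx Pn = 0)
    (stat3 : Pn - F ∘ An + (τr * E0) • ((G ∘ An) * Dx Qn) = 0)
    (An1 Qn1 Pn1 : ℝ → ℝ)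
    (hAn1 : An1 = An - Δt • ∑ k, bt k • Dx (Q k))
    (hQn1 : Qn1 = Qn - Δt • ∑ k,
        bt k • (Dx (Q k * Q k / A k) + ρ⁻¹ • (A k * Dx (P k))))
    (hPn1 : Pn1 = Pn - Δt • ∑ k,
        b k • (E0 • ((G ∘ A k) * Dx (Q k)) + τr⁻¹ • (P k - F ∘ A k))) :
    (∀ k, A k = An ∧ Q k = Qn ∧ P k = Pn) ∧
      An1 = An ∧ Qn1 = Qn ∧ Pn1 = Pn :=
  imex_well_balanced_general s at_ a bt b Δt τr ρ E0 hΔt hτr hρ hdiag Dx G F An Qn Pn A Q P hA hQ hP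
    stat1 stat2 stat3 An1 Qn1 Pn1 hAn1 hQn1 hPn1
end
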